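/- Let F be a CNF formula over variables x_1,…,x_n with clauses C_1,…,C_m, let s ≥ 1, and let G be the graph with vertices v_i, v̄_i for i ∈ [n] and w_j^1,…,w_j^s for j ∈ [m], with edges {v_i, v̄_i} for all i, and v_i (resp. v̄_i) adjacent to all w_j^ℓ iff x_i ∈ C_j (resp. ¬x_i ∈ C_j). If F is satisfiable, then G has an independent dominating set of size n, provided every clause is nonempty. -/
import Mathlib


/-- `X` is an independent set in `G`. -/
def IsIndepSet' {V : Type*} (G : SimpleGraph V) (X : Set V) : Prop :=
  ∀ x ∈ X, ∀ y ∈ X, ¬ G.Adj x y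

/-- `D` is a dominating set of `G`. -/
def IsDomSet {V : Type*} (G : SimpleGraph V) (D : Set V) : Prop :=
  ∀ v : V, ∃ x ∈ D, x = v ∨ G.Adj x v

/-- The graph built from a CNF formula with `n` variables, `m` clauses `Cl j` (a clause is a
set of literals `(i, b)`, `b = true` meaning the positive literal `x_i`), and `s` copies of
each clause vertex. Vertices `v_i = Sum.inl (i, true)`, `v̄_i = Sum.inl (i, false)`,
`w_j^ℓ = Sum.inr (j, ℓ)`. Edges: `{v_i, v̄_i}`, and a literal vertex is adjacent to all `s`
copies of each clause containing it. -/
def CNFGraph (n m s : ℕ) (Cl : Fin m → Set (Fin n × Bool)) :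
    SimpleGraph ((Fin n × Bool) ⊕ (Fin m × Fin s)) :=
  SimpleGraph.fromRel fun x y =>
    match x, y with
    | Sum.inl (i, _), Sum.inl (i', _) => i = i'
    | Sum.inl l, Sum.inr (j, _) => l ∈ Cl j
    | _, _ => False

/-- If the CNF formula is satisfiable (and every clause is nonempty), then `CNFGraph` has an
independent dominating set of size `n`. -/
theorem cnfGraph_indepDom_of_sat (n m s : ℕ) (Cl : Fin m → Set (Fin n × Bool))
    (hs : 1 ≤ s) (hCl : ∀ j, (Cl j).Nonempty)
    (hsat : ∃ φ : Fin n → Bool, ∀ j, ∃ i, (i, φ i) ∈ Cl j) :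
    ∃ D : Set ((Fin n × Bool) ⊕ (Fin m × Fin s)),
      IsIndepSet' (CNFGraph n m s Cl) D ∧ IsDomSet (CNFGraph n m s Cl) D ∧
        D.ncard = n := by
  obtain ⟨φ, hφ⟩ := hsat
  refine ⟨Set.range (fun i : Fin n => Sum.inl (i, φ i)), ?_, ?_, ?_⟩
  · rintro x ⟨i, rfl⟩ y ⟨i', rfl⟩ hadj
    simp only [CNFGraph, SimpleGraph.fromRel_adj] at hadj
    obtain ⟨hne, h | h⟩ := hadj <;> exact hne (by subst h; rfl)
  · rintro (⟨i, b⟩ | ⟨j, ℓ⟩)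
    · refine ⟨Sum.inl (i, φ i), ⟨i, rfl⟩, ?_⟩
      by_cases hb : b = φ i
      · exact Or.inl (by rw [hb])
      · refine Or.inr ?_
        simp only [CNFGraph, SimpleGraph.fromRel_adj]
        exact ⟨by simp [Ne.symm hb], Or.inl trivial⟩
    · obtain ⟨i, hi⟩ := hφ j
      refine ⟨Sum.inl (i, φ i), ⟨i, rfl⟩, Or.inr ?_⟩
      simp only [CNFGraph, SimpleGraph.fromRel_adj]
      exact ⟨by simp, Or.inl hi⟩
  · have hinj : Function.Injective
        (fun i : Fin n => (Sum.inl (i, φ i) : (Fin n × Bool) ⊕ (Fin m × Fin s))) := by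
      intro a b hab
      exact (Prod.ext_iff.1 (Sum.inl.inj hab)).1
    rw [← Set.image_univ, Set.ncard_image_of_injective _ hinj, Set.ncard_univ, Nat.card_eq_fintype_card, Fintype.card_fin]
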